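/- arXiv:1703.00191 — 2 statements merged into one kernel-verified Lean document; each statement's English description precedes it below -/
import Mathlib

section
/- The function u(x,t) = 2/(12 + 3*sqrt(14)*cosh(-x/3 + 5/3 + t/27)) is a classical solution of the Gardner equation u_t + 4*u*u_x - 3*u^2*u_x + u_xxx = 0 for all real x and t; that is, for α = 4, β = -3, μ = 1 the equation u_t + α u u_x + β u^2 u_x + u_xxx = 0 holds identically. -/
/-- The bell-shaped solitary wave `u(x,t) = 2/(12 + 3√14 cosh(-x/3 + 5/3 + t/27))`. -/
noncomputable def uBell (x t : ℝ) : ℝ :=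
  2 / (12 + 3 * Real.sqrt 14 * Real.cosh (-x / 3 + 5 / 3 + t / 27))

noncomputable def th (t x : ℝ) : ℝ := -x / 3 + 5 / 3 + t / 27

noncomputable def Dd (t x : ℝ) : ℝ := 12 + 3 * Real.sqrt 14 * Real.cosh (th t x)

lemma Dd_pos (t x : ℝ) : 0 < Dd t x := by
  unfold Dd
  have h1 : (0:ℝ) < Real.cosh (th t x) := Real.cosh_pos _
  have h2 : (0:ℝ) ≤ Real.sqrt 14 := Real.sqrt_nonneg 14
  positivity

lemma hth (t x : ℝ) : HasDerivAt (fun y => th t y) (-(1/3)) x := by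
  unfold th
  have h : HasDerivAt (fun y : ℝ => -y / 3) (-(1/3)) x := by
    have h0 := (hasDerivAt_id x).neg.div_const 3
    exact h0.congr_deriv (by norm_num)
  exact (h.add_const (5/3 : ℝ)).add_const (t/27)

lemma htht (x t : ℝ) : HasDerivAt (fun s => th s x) (1/27) t := by
  unfold th
  have h : HasDerivAt (fun s : ℝ => s / 27) (1/27) t := (hasDerivAt_id t).div_const 27
  exact h.const_add (-x / 3 + 5 / 3)

lemma hDx (t x : ℝ) :
    HasDerivAt (fun y => Dd t y)
      (3 * Real.sqrt 14 * (Real.sinh (th t x) * (-(1/3)))) x := by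
  unfold Dd
  exact ((hth t x).cosh.const_mul (3 * Real.sqrt 14)).const_add 12

noncomputable def V1 (t x : ℝ) : ℝ :=
  2 * (3 * Real.sqrt 14) * Real.sinh (th t x) / (3 * (Dd t x) ^ 2)

noncomputable def V2 (t x : ℝ) : ℝ :=
  (2 * (3 * Real.sqrt 14) / 9) *
    (-Real.cosh (th t x) / (Dd t x) ^ 2
      + 2 * (3 * Real.sqrt 14) * (Real.sinh (th t x)) ^ 2 / (Dd t x) ^ 3)

noncomputable def V3 (t x : ℝ) : ℝ :=
  (2 * (3 * Real.sqrt 14) / 9) *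
    (Real.sinh (th t x) / (3 * (Dd t x) ^ 2)
      - 2 * (3 * Real.sqrt 14) * Real.sinh (th t x) * Real.cosh (th t x) / (Dd t x) ^ 3
      + 2 * (3 * Real.sqrt 14) ^ 2 * (Real.sinh (th t x)) ^ 3 / (Dd t x) ^ 4)

lemma hU1 (t x : ℝ) : HasDerivAt (fun y => uBell y t) (V1 t x) x := by
  have h := (hasDerivAt_const x (2:ℝ)).div (hDx t x) (Dd_pos t x).ne'
  have he : V1 t x =
      (0 * Dd t x - 2 * (3 * Real.sqrt 14 * (Real.sinh (th t x) * (-(1/3))))) / (Dd t x) ^ 2 := by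
    unfold V1
    have hD := (Dd_pos t x).ne'
    field_simp
    ring
  rw [he]
  exact h

lemma hU2 (t x : ℝ) : HasDerivAt (fun y => V1 t y) (V2 t x) x := by
  have hD := (Dd_pos t x).ne'
  have hDen : HasDerivAt (fun y => 3 * (Dd t y) ^ 2)
      (3 * (2 * Dd t x ^ 1 * (3 * Real.sqrt 14 * (Real.sinh (th t x) * (-(1/3)))))) x :=
    ((hDx t x).pow 2).const_mul 3
  have hN : HasDerivAt (fun y => 2 * (3 * Real.sqrt 14) * Real.sinh (th t y))
      (2 * (3 * Real.sqrt 14) * (Real.cosh (th t x) * (-(1/3)))) x :=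
    (hth t x).sinh.const_mul _
  have h := hN.div hDen (by positivity)
  have he : V2 t x =
      (2 * (3 * Real.sqrt 14) * (Real.cosh (th t x) * (-(1/3))) * (3 * (Dd t x) ^ 2)
        - 2 * (3 * Real.sqrt 14) * Real.sinh (th t x)
          * (3 * (2 * Dd t x ^ 1 * (3 * Real.sqrt 14 * (Real.sinh (th t x) * (-(1/3)))))))
        / (3 * (Dd t x) ^ 2) ^ 2 := by
    unfold V2
    field_simp
    ring
  rw [he]
  exact h

lemma hU3 (t x : ℝ) : HasDerivAt (fun y => V2 t y) (V3 t x) x := by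
  have hD := (Dd_pos t x).ne'
  have h1 := ((hth t x).cosh.neg).div ((hDx t x).pow 2) (pow_ne_zero _ hD)
  have h2num : HasDerivAt (fun y => 2 * (3 * Real.sqrt 14) * (Real.sinh (th t y)) ^ 2)
      (2 * (3 * Real.sqrt 14) * (2 * Real.sinh (th t x) ^ 1 * (Real.cosh (th t x) * (-(1/3))))) x :=
    ((hth t x).sinh.pow 2).const_mul _
  have h2 := h2num.div ((hDx t x).pow 3) (pow_ne_zero _ hD)
  have h := (h1.add h2).const_mul (2 * (3 * Real.sqrt 14) / 9)
  have he : V3 t x =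
      2 * (3 * Real.sqrt 14) / 9 *
        ((-(Real.sinh (th t x) * (-(1/3))) * (Dd t x) ^ 2
            - -Real.cosh (th t x)
              * (2 * Dd t x ^ 1 * (3 * Real.sqrt 14 * (Real.sinh (th t x) * (-(1/3))))))
          / ((Dd t x) ^ 2) ^ 2
        + (2 * (3 * Real.sqrt 14)
              * (2 * Real.sinh (th t x) ^ 1 * (Real.cosh (th t x) * (-(1/3)))) * (Dd t x) ^ 3
            - 2 * (3 * Real.sqrt 14) * (Real.sinh (th t x)) ^ 2
              * (3 * Dd t x ^ 2 * (3 * Real.sqrt 14 * (Real.sinh (th t x) * (-(1/3))))))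
          / ((Dd t x) ^ 3) ^ 2) := by
    unfold V3
    field_simp
    ring
  rw [he]
  exact h

lemma hUt (x t : ℝ) :
    HasDerivAt (fun s => uBell x s)
      (-(2 * (3 * Real.sqrt 14) * Real.sinh (th t x)) / (27 * (Dd t x) ^ 2)) t := by
  have hDt : HasDerivAt (fun s => Dd s x)
      (3 * Real.sqrt 14 * (Real.sinh (th t x) * (1/27))) t := by
    unfold Dd
    exact ((htht x t).cosh.const_mul (3 * Real.sqrt 14)).const_add 12
  have h := (hasDerivAt_const t (2:ℝ)).div hDt (Dd_pos t x).ne'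
  have he : -(2 * (3 * Real.sqrt 14) * Real.sinh (th t x)) / (27 * (Dd t x) ^ 2) =
      (0 * Dd t x - 2 * (3 * Real.sqrt 14 * (Real.sinh (th t x) * (1/27)))) / (Dd t x) ^ 2 := by
    have hD := (Dd_pos t x).ne'
    field_simp
    ring
  rw [he]
  exact h

/-- `uBell` solves the Gardner equation `u_t + 4 u u_x - 3 u² u_x + u_xxx = 0`. -/
theorem stmt_0 (α β μ : ℝ) (hα : α = 4) (hβ : β = -3) (hμ : μ = 1) :
    ∀ x t : ℝ,
      deriv (fun s => uBell x s) t
        + α * uBell x t * deriv (fun y => uBell y t) x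
        + β * (uBell x t) ^ 2 * deriv (fun y => uBell y t) x
        + μ * iteratedDeriv 3 (fun y => uBell y t) x = 0 := by
  subst hα hβ hμ
  intro x t
  have e1 : deriv (fun s => uBell x s) t =
      -(2 * (3 * Real.sqrt 14) * Real.sinh (th t x)) / (27 * (Dd t x) ^ 2) := (hUt x t).deriv
  have e2 : deriv (fun y => uBell y t) x = V1 t x := (hU1 t x).deriv
  have f1 : deriv (fun y => uBell y t) = fun y => V1 t y := funext fun y => (hU1 t y).deriv
  have f2 : deriv (fun y => V1 t y) = fun y => V2 t y := funext fun y => (hU2 t y).deriv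
  have e3 : iteratedDeriv 3 (fun y => uBell y t) x = V3 t x := by
    rw [iteratedDeriv_eq_iterate]
    show deriv (deriv (deriv (fun y => uBell y t))) x = V3 t x
    rw [f1, f2]
    exact (hU3 t x).deriv
  have hub : uBell x t = 2 / Dd t x := rfl
  rw [e1, e2, e3, hub]
  unfold V1 V3
  have hD := (Dd_pos t x).ne'
  have hch : Real.cosh (th t x) ^ 2 = Real.sinh (th t x) ^ 2 + 1 := Real.cosh_sq _
  have hq2 : Real.sqrt 14 ^ 2 = 14 := Real.sq_sqrt (by norm_num)
  set ch := Real.cosh (th t x)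
  set sh := Real.sinh (th t x)
  set q := Real.sqrt 14
  set D := Dd t x
  have hDdef : D = 12 + 3 * q * ch := rfl
  field_simp
  linear_combination (2 * q * sh * (1944 - 486 * q * ch)) * hDdef
    - 2916 * q ^ 3 * sh * hch - 2916 * q * sh * hq2
end

section
/- The function u(x,t) = 1/10 - (1/10)*tanh((sqrt(30)/60)*(x - t/30)) is a classical solution of the Gardner equation u_t + u*u_x - 5*u^2*u_x + u_xxx = 0 for all real x and t; that is, for α = 1, β = -5, μ = 1 the equation u_t + α u u_x + β u^2 u_x + μ u_xxx = 0 holds identically. -/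
lemma hasDerivAt_tanh (x : ℝ) :
    HasDerivAt Real.tanh (1 - Real.tanh x ^ 2) x := by
  have hc : Real.cosh x ≠ 0 := (Real.cosh_pos x).ne'
  have h := (Real.hasDerivAt_sinh x).div (Real.hasDerivAt_cosh x) hc
  have hfun : (Real.sinh / Real.cosh) = Real.tanh := by
    funext y; rw [Pi.div_apply, Real.tanh_eq_sinh_div_cosh]
  rw [hfun] at h
  refine h.congr_deriv ?_
  rw [Real.tanh_eq_sinh_div_cosh]
  have h1 : Real.cosh x ^ 2 - Real.sinh x ^ 2 = 1 := Real.cosh_sq_sub_sinh_sq x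
  field_simp

/-- The kink-type wave `u(x,t) = 1/10 - (1/10) tanh((√30/60)(x - t/30))`. -/
noncomputable def uKink (x t : ℝ) : ℝ :=
  1 / 10 - (1 / 10) * Real.tanh ((Real.sqrt 30 / 60) * (x - t / 30))

/-- `uKink` solves the Gardner equation `u_t + u u_x - 5 u² u_x + u_xxx = 0`. -/
theorem stmt_1 (α β μ : ℝ) (hα : α = 1) (hβ : β = -5) (hμ : μ = 1) :
    ∀ x t : ℝ,
      deriv (fun s => uKink x s) t
        + α * uKink x t * deriv (fun y => uKink y t) x
        + β * (uKink x t) ^ 2 * deriv (fun y => uKink y t) x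
        + μ * iteratedDeriv 3 (fun y => uKink y t) x = 0 := by
  subst hα hβ hμ
  intro x t
  set c : ℝ := Real.sqrt 30 / 60 with hc
  have hc2 : c ^ 2 = 1 / 120 := by
    rw [hc, div_pow, Real.sq_sqrt (by norm_num : (30:ℝ) ≥ 0)]
    norm_num
  -- tanh of the phase, derivatives in x
  have hT : ∀ y : ℝ, HasDerivAt (fun y => Real.tanh (c * (y - t / 30)))
      (c * (1 - Real.tanh (c * (y - t / 30)) ^ 2)) y := by
    intro y
    have hz : HasDerivAt (fun y : ℝ => c * (y - t / 30)) c y := by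
      simpa using ((hasDerivAt_id y).sub_const (t / 30)).const_mul c
    have := (hasDerivAt_tanh (c * (y - t / 30))).comp y hz
    refine this.congr_deriv ?_
    ring
  set T : ℝ → ℝ := fun y => Real.tanh (c * (y - t / 30)) with hTdef
  -- u_x
  have hux : deriv (fun y => uKink y t) = fun y => -(c / 10) * (1 - T y ^ 2) := by
    funext y
    have h : HasDerivAt (fun y => uKink y t) (-(c / 10) * (1 - T y ^ 2)) y := by
      have := ((hT y).const_mul (1/10 : ℝ)).const_sub (1/10 : ℝ)
      unfold uKink
      refine this.congr_deriv ?_; ring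
    exact h.deriv
  -- second derivative
  have hux2 : deriv (fun y => -(c / 10) * (1 - T y ^ 2))
      = fun y => (c ^ 2 / 5) * T y * (1 - T y ^ 2) := by
    funext y
    have h : HasDerivAt (fun y => -(c / 10) * (1 - T y ^ 2))
        ((c ^ 2 / 5) * T y * (1 - T y ^ 2)) y := by
      have := (((hT y).pow 2).const_sub 1).const_mul (-(c / 10))
      refine this.congr_deriv ?_
      push_cast; ring
    exact h.deriv
  -- third derivative
  have hux3 : deriv (fun y => (c ^ 2 / 5) * T y * (1 - T y ^ 2))
      = fun y => (c ^ 3 / 5) * (1 - T y ^ 2) * (1 - 3 * T y ^ 2) := by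
    funext y
    have h : HasDerivAt (fun y => (c ^ 2 / 5) * T y * (1 - T y ^ 2))
        ((c ^ 3 / 5) * (1 - T y ^ 2) * (1 - 3 * T y ^ 2)) y := by
      have hmul := ((hT y).mul (((hT y).pow 2).const_sub 1)).const_mul (c ^ 2 / 5)
      have heq : (fun y => (c ^ 2 / 5) * T y * (1 - T y ^ 2))
          = fun y => (c ^ 2 / 5) * (T y * (1 - T y ^ 2)) := by
        funext z; ring
      rw [heq]
      refine hmul.congr_deriv ?_
      push_cast; simp only [Pi.pow_apply]; ring
    exact h.deriv
  -- u_t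
  have hut : deriv (fun s => uKink x s) t = (c / 300) * (1 - T x ^ 2) := by
    have hz : HasDerivAt (fun s : ℝ => c * (x - s / 30)) (-(c / 30)) t := by
      have h0 : HasDerivAt (fun s : ℝ => x - s / 30) (-(1 / 30) : ℝ) t := by
        simpa using (((hasDerivAt_id t).div_const 30).const_sub x)
      have := h0.const_mul c
      refine this.congr_deriv ?_; ring
    have htanh := (hasDerivAt_tanh (c * (x - t / 30))).comp t hz
    have h : HasDerivAt (fun s => uKink x s) ((c / 300) * (1 - T x ^ 2)) t := by
      have := (htanh.const_mul (1/10 : ℝ)).const_sub (1/10 : ℝ)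
      unfold uKink
      refine this.congr_deriv ?_
      simp only [hTdef]; ring
    exact h.deriv
  have h3 : iteratedDeriv 3 (fun y => uKink y t) x
      = (c ^ 3 / 5) * (1 - T x ^ 2) * (1 - 3 * T x ^ 2) := by
    have e3 : iteratedDeriv 3 (fun y => uKink y t)
        = deriv (deriv (deriv (fun y => uKink y t))) := by
      rw [show (3 : ℕ) = 2 + 1 from rfl, iteratedDeriv_succ,
        show (2 : ℕ) = 1 + 1 from rfl, iteratedDeriv_succ, iteratedDeriv_one]
    rw [e3, hux, hux2, hux3]
  have hu : uKink x t = 1 / 10 - (1 / 10) * T x := rfl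
  rw [hut, hu, hux, h3]
  have key : c ^ 2 = 1 / 120 := hc2
  linear_combination (c * (1 - T x ^ 2) * (1 - 3 * T x ^ 2) / 5) * key
end
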